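/- (Theorem 2, Correctness of Pinpointing.) Let P be a c-property and suppose the fixed set of rules together with the map δ forms a consequence-based algorithm correct for P. Let O be an ontology and α a consequence such that α ∈ δ(O') for every O' ⊆ O. If O^pin ⇀* A^pin, A^pin is pinpointing saturated, and α:φ_α ∈ A^pin, then φ_α is a pinpointing formula for α w.r.t. O and P; that is, for every valuation V ⊆ lab(O): (O_V, α) ∈ P if and only if V ⊨ φ_α. -/
import Mathlib


/-- Monotone Boolean formulas over propositional variables of type `V`. -/
inductive MBF (V : Type) : Type
  | var : V → MBF V
  | top : MBF V
  | bot : MBF V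
  | and : MBF V → MBF V → MBF V
  | or  : MBF V → MBF V → MBF V

/-- Satisfaction of a monotone Boolean formula by a valuation (a set of variables). -/
def MBF.sat {V : Type} (v : Set V) : MBF V → Prop
  | .var p => p ∈ v
  | .top => True
  | .bot => False
  | .and φ ψ => φ.sat v ∧ ψ.sat v
  | .or φ ψ => φ.sat v ∨ ψ.sat v

/-- `φ` entails `ψ`: every valuation satisfying `φ` satisfies `ψ`. -/
def MBF.entails {V : Type} (φ ψ : MBF V) : Prop :=
  ∀ v : Set V, φ.sat v → ψ.sat v

/-- A rule: a pair of finite sets of consequences (premises and results). -/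
structure Rule (C : Type) where
  pre : Finset C
  res : Finset C

/-- A rule `R` is applicable to a state `A` if `pre R ⊆ A` and `res R ⊄ A`. -/
def applicable {C : Type} (R : Rule C) (A : Set C) : Prop :=
  ↑R.pre ⊆ A ∧ ¬ (↑R.res ⊆ A)

/-- Classical rule application: `A →_R B`. -/
def step {C : Type} (R : Rule C) (A B : Set C) : Prop :=
  applicable R A ∧ B = A ∪ ↑R.res

/-- One step with some rule from the fixed set of rules `Rs`. -/
def stepAny {C : Type} (Rs : Set (Rule C)) (A B : Set C) : Prop :=
  ∃ R ∈ Rs, step R A B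

/-- Reflexive-transitive closure of classical rule application: `A →* B`. -/
def steps {C : Type} (Rs : Set (Rule C)) : Set C → Set C → Prop :=
  Relation.ReflTransGen (stepAny Rs)

/-- A state is saturated if no rule (from `Rs`) is applicable to it. -/
def saturated {C : Type} (Rs : Set (Rule C)) (A : Set C) : Prop :=
  ∀ R ∈ Rs, ¬ applicable R A

/-- A pinpointing state: a labelling of a finite set of consequences with
monotone Boolean formulas (`none` = unlabelled). -/
structure PState (C V : Type) where
  lab : C → Option (MBF V)
  finite : {c : C | lab c ≠ none}.Finite

/-- The label of `α` in `A`, which is `⊥` if `α` is unlabelled. -/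
def PState.labOf {C V : Type} (A : PState C V) (α : C) : MBF V :=
  (A.lab α).getD .bot

/-- `fm(X, A)`: the conjunction of the labels of the elements of `X`. -/
noncomputable def fm {C V : Type} (X : Finset C) (A : PState C V) : MBF V :=
  (X.toList.map A.labOf).foldr .and .top

/-- `R` is pinpointing applicable to `A` if `fm(pre R, A)` does not entail `fm(res R, A)`. -/
def pinApplicable {C V : Type} (R : Rule C) (A : PState C V) : Prop :=
  ¬ (fm R.pre A).entails (fm R.res A)

open Classical in
/-- Pinpointing rule application `A ⇀_R B`: each `α ∈ res R` is relabelled with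
`φ_α ∨ fm(pre R, A)` (with `φ_α = ⊥` if `α` was unlabelled); all other labels unchanged. -/
def pinStep {C V : Type} (R : Rule C) (A B : PState C V) : Prop :=
  pinApplicable R A ∧
  ∀ α : C, B.lab α =
    if α ∈ R.res then some ((A.labOf α).or (fm R.pre A)) else A.lab α

/-- One pinpointing step with some rule from `Rs`. -/
def pinStepAny {C V : Type} (Rs : Set (Rule C)) (A B : PState C V) : Prop :=
  ∃ R ∈ Rs, pinStep R A B

/-- Reflexive-transitive closure of pinpointing rule application: `A ⇀* B`. -/
def pinSteps {C V : Type} (Rs : Set (Rule C)) : PState C V → PState C V → Prop :=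
  Relation.ReflTransGen (pinStepAny Rs)

/-- A pinpointing state is pinpointing saturated if no rule is pinpointing applicable. -/
def pinSaturated {C V : Type} (Rs : Set (Rule C)) (A : PState C V) : Prop :=
  ∀ R ∈ Rs, ¬ pinApplicable R A

/-- The projection `A_V` of a pinpointing state under a valuation `v`. -/
def PState.proj {C V : Type} (A : PState C V) (v : Set V) : Set C :=
  {α | ∃ φ, A.lab α = some φ ∧ φ.sat v}

open Classical in
/-- `O^pin`: the initial pinpointing state labelling each axiom `α ∈ O` with the
propositional variable `labv α`. -/
noncomputable def initPState {C V : Type} (labv : C → V) (O : Finset C) : PState C V :=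
  ⟨fun α => if α ∈ O then some (.var (labv α)) else none,
   Set.Finite.subset O.finite_toSet (by
     intro c hc
     simp only [Set.mem_setOf_eq, ne_eq, ite_eq_right_iff, not_forall] at hc
     exact hc.choose)⟩

/-- A consequence-based algorithm (the fixed rules `Rs` with derivable consequences `δ`)
is correct for the c-property `P`: (i) it terminates, and (ii) whenever `O →* A` with `A`
saturated, then for every `α ∈ δ O`, `(O, α) ∈ P` iff `α ∈ A`. -/
def correctAlgo {C : Type} (Rs : Set (Rule C)) (δ : Finset C → Finset C)
    (P : Finset C → C → Prop) : Prop :=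
  (∀ O : Finset C,
    ¬ ∃ g : ℕ → Set C, g 0 = ↑O ∧ ∀ i : ℕ, stepAny Rs (g i) (g (i + 1))) ∧
  (∀ (O : Finset C) (A : Set C), steps Rs ↑O A → saturated Rs A →
    ∀ α ∈ δ O, (P O α ↔ α ∈ A))

lemma mem_proj {C V : Type} (A : PState C V) (v : Set V) (γ : C) :
    γ ∈ A.proj v ↔ (A.labOf γ).sat v := by
  unfold PState.proj PState.labOf
  cases h : A.lab γ with
  | none => simp [h, MBF.sat]
  | some φ => simp [h]

lemma sat_foldr {V : Type} (v : Set V) (l : List (MBF V)) :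
    (l.foldr MBF.and MBF.top).sat v ↔ ∀ φ ∈ l, φ.sat v := by
  induction l with
  | nil => simp [MBF.sat]
  | cons a l ih => simp [MBF.sat, ih]

lemma sat_fm {C V : Type} (X : Finset C) (A : PState C V) (v : Set V) :
    (fm X A).sat v ↔ ∀ β ∈ X, (A.labOf β).sat v := by
  unfold fm
  rw [sat_foldr]
  simp

lemma sat_fm_iff_subset {C V : Type} (X : Finset C) (A : PState C V) (v : Set V) :
    (fm X A).sat v ↔ ↑X ⊆ A.proj v := by
  rw [sat_fm]
  constructor
  · intro h β hβ; exact (mem_proj A v β).2 (h β hβ)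
  · intro h β hβ; exact (mem_proj A v β).1 (h hβ)

lemma proj_pinStep {C V : Type} (Rs : Set (Rule C)) {A B : PState C V}
    (h : pinStepAny Rs A B) (v : Set V) :
    steps Rs (A.proj v) (B.proj v) := by
  obtain ⟨R, hR, happ, hB⟩ := h
  by_cases hpre : (fm R.pre A).sat v
  · have hBp : B.proj v = A.proj v ∪ ↑R.res := by
      ext γ
      rw [mem_proj, Set.mem_union, mem_proj]
      unfold PState.labOf
      rw [hB γ]
      by_cases hγ : γ ∈ R.res
      · simp only [hγ, if_pos, Option.getD_some, Finset.mem_coe]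
        show ((A.lab γ).getD .bot).sat v ∨ _ ↔ _
        tauto
      · simp [hγ]
    by_cases hres : ↑R.res ⊆ A.proj v
    · have : B.proj v = A.proj v := by
        rw [hBp]; exact Set.union_eq_self_of_subset_right hres
      rw [this]; exact Relation.ReflTransGen.refl
    · refine Relation.ReflTransGen.single ⟨R, hR, ⟨?_, hres⟩, hBp⟩
      exact (sat_fm_iff_subset R.pre A v).1 hpre
  · have : B.proj v = A.proj v := by
      ext γ
      rw [mem_proj, mem_proj]
      unfold PState.labOf
      rw [hB γ]
      by_cases hγ : γ ∈ R.res
      · simp only [hγ, if_pos, Option.getD_some]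
        show ((A.lab γ).getD .bot).sat v ∨ _ ↔ _
        tauto
      · simp [hγ]
    rw [this]; exact Relation.ReflTransGen.refl

lemma proj_pinSteps {C V : Type} (Rs : Set (Rule C)) {A B : PState C V}
    (h : pinSteps Rs A B) (v : Set V) :
    steps Rs (A.proj v) (B.proj v) := by
  induction h with
  | refl => exact Relation.ReflTransGen.refl
  | tail _ hstep ih => exact ih.trans (proj_pinStep Rs hstep v)

lemma saturated_proj {C V : Type} (Rs : Set (Rule C)) (A : PState C V)
    (hsat : pinSaturated Rs A) (v : Set V) : saturated Rs (A.proj v) := by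
  intro R hR ⟨hpre, hres⟩
  have hent := not_not.1 (hsat R hR)
  have h1 : (fm R.pre A).sat v := (sat_fm_iff_subset R.pre A v).2 hpre
  exact hres ((sat_fm_iff_subset R.res A v).1 (hent v h1))

open Classical in
lemma proj_init {C V : Type} (labv : C → V) (O : Finset C) (v : Set V) :
    (initPState labv O).proj v = ↑(O.filter (fun β => labv β ∈ v)) := by
  ext γ
  simp only [PState.proj, initPState, Set.mem_setOf_eq, Finset.coe_filter, Set.mem_setOf_eq]
  by_cases hγ : γ ∈ O
  · simp [hγ, MBF.sat]
  · simp [hγ]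

open Classical in
/-- Theorem 2, Correctness of Pinpointing: given a correct consequence-based
algorithm for a monotone c-property `P`, if `O^pin ⇀* A^pin`, `A^pin` is pinpointing
saturated and `α : φ_α ∈ A^pin`, then `φ_α` is a pinpointing formula for `α` w.r.t. `O`
and `P`: for every valuation `v ⊆ lab(O)`, `(O_v, α) ∈ P` iff `v ⊨ φ_α`. -/
theorem stmt8 {C V : Type} (Rs : Set (Rule C)) (labv : C → V)
    (hinj : Function.Injective labv)
    (P : Finset C → C → Prop)
    (hmono : ∀ (O O' : Finset C) (α : C), O ⊆ O' → P O α → P O' α)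
    (δ : Finset C → Finset C)
    (hcorrect : correctAlgo Rs δ P)
    (O : Finset C) (α : C) (hδ : ∀ O' ⊆ O, α ∈ δ O')
    (Apin : PState C V)
    (hreach : pinSteps Rs (initPState labv O) Apin)
    (hsat : pinSaturated Rs Apin)
    (φ : MBF V) (hlab : Apin.lab α = some φ) :
    ∀ v : Set V, v ⊆ labv '' ↑O →
      (P (O.filter (fun β => labv β ∈ v)) α ↔ φ.sat v) := by
  intro v hv
  set O' := O.filter (fun β => labv β ∈ v) with hO'
  have hO'sub : O' ⊆ O := Finset.filter_subset _ _
  have hreach' : steps Rs ↑O' (Apin.proj v) := by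
    have := proj_pinSteps Rs hreach v
    rwa [proj_init labv O v] at this
  have hsat' : saturated Rs (Apin.proj v) := saturated_proj Rs Apin hsat v
  have hcor := hcorrect.2 O' (Apin.proj v) hreach' hsat' α (hδ O' hO'sub)
  rw [hcor, mem_proj]
  unfold PState.labOf
  rw [hlab]
  simp
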